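/- Let A = {u, v, w} and B = {x, y, z} be the triangles of Example 2 (six points on the unit circle with clockwise order u, x, y, v, w, z, both triangles containing the origin, and the diameter through w crossing the circle strictly between u and x). After performing the unique feasible symmetric exchange, obtaining A' = {u, y, w} and B' = {x, v, z}, the only symmetric exchange (a, b) with a ∈ A', b ∈ B' such that both (A' \ {a}) ∪ {b} and (B' \ {b}) ∪ {a} are 0-embracing is again (y, v). Consequently, the pair (A, B) cannot be transformed into (B, A) by any sequence of symmetric exchanges preserving 0-embracingness at every step. -/

import Mathlib

/-!
Three points of the unit circle lying on a closed arc shorter than a half circle do not embrace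
the origin: for the direction `φ` bisecting the arc, `cos (θ - φ) > 0` at each of them. On an arc
of length exactly `π` they still miss the interior of their hull, so the two triangles of
Example 2 have all gaps between consecutive vertices below `π`. For the points `u, x, y, v, w, z`
every exchange between `{u, v, w}` and `{x, y, z}` other than `(v, y)`, and every exchange
between `{u, y, w}` and `{x, v, z}` other than `(y, v)`, leaves one of the new triangles on such
an arc. Hence embracing exchanges just toggle between these two pairs, and never reach a pair
whose first set is `{x, y, z}`, which misses `u`.
-/

/-- The point of the unit circle in the plane at angle `θ` (measured counterclockwise). -/
noncomputable def circlePt (θ : ℝ) : ℝ × ℝ := (Real.cos θ, Real.sin θ)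

open Set Real

theorem zero_notMem_convexHull_of_forall_pos {E : Type*} [AddCommGroup E] [Module ℝ E]
    (ℓ : E →ₗ[ℝ] ℝ) {s : Set E} (h : ∀ p ∈ s, 0 < ℓ p) : (0 : E) ∉ convexHull ℝ s := fun h0 => by
  have h0' : (0 : E) ∈ ℓ ⁻¹' Ioi 0 := convexHull_min h ((convex_Ioi 0).linear_preimage ℓ) h0
  simp at h0'

theorem zero_notMem_interior_convexHull_of_forall_nonneg {E : Type*} [AddCommGroup E]
    [TopologicalSpace E] [ContinuousAdd E] [Module ℝ E] [ContinuousSMul ℝ E]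
    (ℓ : StrongDual ℝ E) (hℓ : ℓ ≠ 0) {s : Set E} (h : ∀ p ∈ s, 0 ≤ ℓ p) :
    (0 : E) ∉ interior (convexHull ℝ s) := fun h0 => by
  have hs : convexHull ℝ s ⊆ ℓ ⁻¹' Ici 0 :=
    convexHull_min h ((convex_Ici 0).linear_preimage (ℓ : E →ₗ[ℝ] ℝ))
  have h0' := interior_mono hs h0
  rw [← (ℓ.isOpenMap_of_ne_zero hℓ).preimage_interior_eq_interior_preimage ℓ.continuous,
    interior_Ici] at h0'
  simp at h0'

noncomputable def circleDual (φ : ℝ) : StrongDual ℝ (ℝ × ℝ) :=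
  cos φ • ContinuousLinearMap.fst ℝ ℝ ℝ + sin φ • ContinuousLinearMap.snd ℝ ℝ ℝ

theorem circleDual_circlePt (φ θ : ℝ) : circleDual φ (circlePt θ) = cos (θ - φ) := by
  simp only [circleDual, circlePt, add_apply, smul_apply,
    ContinuousLinearMap.coe_fst', ContinuousLinearMap.coe_snd', smul_eq_mul, cos_sub]
  ring

theorem circleDual_ne_zero (φ : ℝ) : circleDual φ ≠ 0 := fun h => by
  simpa [h] using circleDual_circlePt φ φ

theorem circlePt_sub_two_pi (θ : ℝ) : circlePt (θ - 2 * π) = circlePt θ := by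
  simp [circlePt]

theorem circlePt_ne_of_lt {θ₁ θ₂ : ℝ} (h : θ₂ < θ₁) (h' : θ₁ < θ₂ + 2 * π) :
    circlePt θ₁ ≠ circlePt θ₂ := fun heq => by
  have hcos : cos (θ₁ - θ₂) = 1 := by
    rw [← circleDual_circlePt, heq, circleDual_circlePt, sub_self, cos_zero]
  have := (cos_eq_one_iff_of_lt_of_lt (by linarith) (by linarith)).1 hcos
  linarith

theorem circlePt_mem_arc {lo hi θ : ℝ} (h₁ : lo ≤ θ) (h₂ : θ ≤ hi) :
    circlePt θ ∈ circlePt '' Icc lo hi :=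
  mem_image_of_mem circlePt ⟨h₁, h₂⟩

theorem zero_notMem_convexHull_of_subset_arc {lo hi : ℝ} (hlen : hi < lo + π)
    {s : Set (ℝ × ℝ)} (hs : s ⊆ circlePt '' Icc lo hi) : (0 : ℝ × ℝ) ∉ convexHull ℝ s := by
  refine zero_notMem_convexHull_of_forall_pos (circleDual ((lo + hi) / 2)) fun p hp => ?_
  obtain ⟨θ, ⟨h₁, h₂⟩, rfl⟩ := hs hp
  rw [ContinuousLinearMap.coe_coe, circleDual_circlePt]
  exact cos_pos_of_mem_Ioo ⟨by linarith, by linarith⟩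

theorem add_pi_lt_of_zero_mem_interior_convexHull {lo hi : ℝ} {s : Set (ℝ × ℝ)}
    (hs : s ⊆ circlePt '' Icc lo hi) (h0 : (0 : ℝ × ℝ) ∈ interior (convexHull ℝ s)) :
    lo + π < hi := by
  by_contra! hlen
  refine zero_notMem_interior_convexHull_of_forall_nonneg _ (circleDual_ne_zero ((lo + hi) / 2))
    (fun p hp => ?_) h0
  obtain ⟨θ, ⟨h₁, h₂⟩, rfl⟩ := hs hp
  rw [circleDual_circlePt]
  exact cos_nonneg_of_mem_Icc ⟨by linarith, by linarith⟩

theorem insert_triple_sdiff_middle {α : Type*} {a b x z : α} (hx : x ≠ a) (hz : z ≠ a) :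
    insert b (({x, a, z} : Set α) \ {a}) = {x, b, z} := by
  ext
  simp only [mem_insert_iff, mem_sdiff, mem_singleton_iff]
  grind

/-- Angles of six points of the unit circle in clockwise order `u, x, {p, q}, w, z`.
Example 2 is the case `(p, q) = (v, y)`, and the pair obtained from it by the exchange of `v`
and `y` is the case `(p, q) = (y, v)`; the triangles are `{u, p, w}` and `{x, q, z}`. -/
structure ExchangeConfig (au ax ap aq aw az : ℝ) : Prop where
  z_lt_w : az < aw
  w_lt_p : aw < ap
  w_lt_q : aw < aq
  p_lt_x : ap < ax
  q_lt_x : aq < ax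
  u_sub_two_pi_lt_z : au - 2 * π < az
  x_lt_w_add_pi : ax < aw + π
  w_add_pi_lt_u : aw + π < au
  u_lt_min_add_pi : au < min ap aq + π
  max_lt_z_add_pi : max ap aq < az + π

namespace ExchangeConfig

variable {au ax ap aq aw az : ℝ}

theorem swap (h : ExchangeConfig au ax ap aq aw az) : ExchangeConfig au ax aq ap aw az where
  z_lt_w := h.z_lt_w
  w_lt_p := h.w_lt_q
  w_lt_q := h.w_lt_p
  p_lt_x := h.q_lt_x
  q_lt_x := h.p_lt_x
  u_sub_two_pi_lt_z := h.u_sub_two_pi_lt_z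
  x_lt_w_add_pi := h.x_lt_w_add_pi
  w_add_pi_lt_u := h.w_add_pi_lt_u
  u_lt_min_add_pi := min_comm ap aq ▸ h.u_lt_min_add_pi
  max_lt_z_add_pi := max_comm ap aq ▸ h.max_lt_z_add_pi

theorem eq_of_embracing (h : ExchangeConfig au ax ap aq aw az) :
    ∀ a ∈ ({circlePt au, circlePt ap, circlePt aw} : Set (ℝ × ℝ)),
    ∀ b ∈ ({circlePt ax, circlePt aq, circlePt az} : Set (ℝ × ℝ)),
      (0 : ℝ × ℝ) ∈ convexHull ℝ (insert b ({circlePt au, circlePt ap, circlePt aw} \ {a})) →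
      (0 : ℝ × ℝ) ∈ convexHull ℝ (insert a ({circlePt ax, circlePt aq, circlePt az} \ {b})) →
      a = circlePt ap ∧ b = circlePt aq := by
  obtain ⟨hzw, hwp, hwq, hpx, hqx, huz, hxw, hwu, hmin, hmax⟩ := h
  intro a ha b hb hA hB
  simp only [mem_insert_iff, mem_singleton_iff] at ha hb
  rcases ha with rfl | rfl | rfl <;> rcases hb with rfl | rfl | rfl
  · exact absurd hA (zero_notMem_convexHull_of_subset_arc hxw (by grind [circlePt_mem_arc]))
  · exact absurd hA (zero_notMem_convexHull_of_subset_arc hxw (by grind [circlePt_mem_arc]))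
  · exact absurd hA (zero_notMem_convexHull_of_subset_arc hmax (by grind [circlePt_mem_arc]))
  · exact absurd hB (zero_notMem_convexHull_of_subset_arc hmax (by grind [circlePt_mem_arc]))
  · exact ⟨rfl, rfl⟩
  · rw [← circlePt_sub_two_pi au] at hA
    exact absurd hA (zero_notMem_convexHull_of_subset_arc (lo := au - 2 * π) (hi := aw)
      (by linarith) (by grind [circlePt_mem_arc]))
  · exact absurd hB (zero_notMem_convexHull_of_subset_arc hmax (by grind [circlePt_mem_arc]))
  · exact absurd hA (zero_notMem_convexHull_of_subset_arc hmin (by grind [circlePt_mem_arc]))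
  · exact absurd hB (zero_notMem_convexHull_of_subset_arc hxw (by grind [circlePt_mem_arc]))

theorem insert_sdiff_left (h : ExchangeConfig au ax ap aq aw az) :
    insert (circlePt aq) (({circlePt au, circlePt ap, circlePt aw} : Set (ℝ × ℝ)) \ {circlePt ap}) =
      {circlePt au, circlePt aq, circlePt aw} := by
  obtain ⟨hzw, hwp, -, hpx, -, huz, hxw, hwu, -, -⟩ := h
  exact insert_triple_sdiff_middle (circlePt_ne_of_lt (by linarith) (by linarith))
    (circlePt_ne_of_lt hwp (by linarith)).symm

theorem insert_sdiff_right (h : ExchangeConfig au ax ap aq aw az) :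
    insert (circlePt ap) (({circlePt ax, circlePt aq, circlePt az} : Set (ℝ × ℝ)) \ {circlePt aq}) =
      {circlePt ax, circlePt ap, circlePt az} := by
  obtain ⟨hzw, -, hwq, -, hqx, huz, hxw, hwu, -, -⟩ := h
  exact insert_triple_sdiff_middle (circlePt_ne_of_lt hqx (by linarith))
    (circlePt_ne_of_lt (by linarith) (by linarith)).symm

theorem circlePt_notMem (h : ExchangeConfig au ax ap aq aw az) :
    circlePt au ∉ ({circlePt ax, circlePt aq, circlePt az} : Set (ℝ × ℝ)) := by
  obtain ⟨hzw, -, hwq, -, hqx, huz, hxw, hwu, -, -⟩ := h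
  simp only [mem_insert_iff, mem_singleton_iff, not_or]
  exact ⟨circlePt_ne_of_lt (by linarith) (by linarith), circlePt_ne_of_lt (by linarith)
    (by linarith), circlePt_ne_of_lt (by linarith) (by linarith)⟩

theorem of_zero_mem_interior {au ax ay av aw az : ℝ} (hyx : ay < ax) (hvy : av < ay)
    (hwv : aw < av) (hzw : az < aw) (huz : au - 2 * π < az) (hxw : ax < aw + π) (hwu : aw + π < au)
    (h0A : (0 : ℝ × ℝ) ∈ interior (convexHull ℝ {circlePt au, circlePt av, circlePt aw}))
    (h0B : (0 : ℝ × ℝ) ∈ interior (convexHull ℝ {circlePt ax, circlePt ay, circlePt az})) :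
    ExchangeConfig au ax av ay aw az := by
  rw [← circlePt_sub_two_pi au] at h0A
  rw [← circlePt_sub_two_pi ax, ← circlePt_sub_two_pi ay] at h0B
  have huv := add_pi_lt_of_zero_mem_interior_convexHull (lo := au - 2 * π) (hi := av)
    (by grind [circlePt_mem_arc]) h0A
  have hyz := add_pi_lt_of_zero_mem_interior_convexHull (lo := ay - 2 * π) (hi := az)
    (by grind [circlePt_mem_arc]) h0B
  exact ⟨hzw, hwv, hwv.trans hvy, hvy.trans hyx, hyx, huz, hxw, hwu,
    by rw [min_eq_left hvy.le]; linarith, by rw [max_eq_right hvy.le]; linarith⟩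

end ExchangeConfig

theorem exchange_sequence_alternates {α : Type*} (P : Set α → Prop) {A B A' B' : Set α}
    {a₀ b₀ : α}
    (hAB : ∀ a ∈ A, ∀ b ∈ B, P (insert b (A \ {a})) → P (insert a (B \ {b})) → a = a₀ ∧ b = b₀)
    (hA'B' : ∀ a ∈ A', ∀ b ∈ B', P (insert b (A' \ {a})) → P (insert a (B' \ {b})) →
      a = b₀ ∧ b = a₀)
    (hA' : insert b₀ (A \ {a₀}) = A') (hB' : insert a₀ (B \ {b₀}) = B')
    (hA : insert a₀ (A' \ {b₀}) = A) (hB : insert b₀ (B' \ {a₀}) = B)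
    {N : ℕ} {f g : ℕ → Set α} (hf0 : f 0 = A) (hg0 : g 0 = B)
    (hstep : ∀ i < N, ∃ a ∈ f i, ∃ b ∈ g i,
      f (i + 1) = insert b (f i \ {a}) ∧ g (i + 1) = insert a (g i \ {b}) ∧
        P (f (i + 1)) ∧ P (g (i + 1))) :
    (f N = A ∧ g N = B) ∨ (f N = A' ∧ g N = B') := by
  suffices ∀ i ≤ N, (f i = A ∧ g i = B) ∨ (f i = A' ∧ g i = B') from this N le_rfl
  intro i hi
  induction i with
  | zero => exact Or.inl ⟨hf0, hg0⟩
  | succ i ih =>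
    obtain ⟨a, ha, b, hb, hf, hg, hPf, hPg⟩ := hstep i hi
    rw [hf] at hPf ⊢
    rw [hg] at hPg ⊢
    rcases ih (by omega) with ⟨hfi, hgi⟩ | ⟨hfi, hgi⟩ <;> rw [hfi] at ha hPf ⊢ <;>
      rw [hgi] at hb hPg ⊢
    · obtain ⟨rfl, rfl⟩ := hAB a ha b hb hPf hPg
      exact Or.inr ⟨hA', hB'⟩
    · obtain ⟨rfl, rfl⟩ := hA'B' a ha b hb hPf hPg
      exact Or.inl ⟨hA, hB⟩

theorem no_symmetric_exchange_swap_general (au ax ay av aw az : ℝ)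
    (h2 : ay < ax) (h3 : av < ay) (h4 : aw < av) (h5 : az < aw)
    (h6 : au - 2 * Real.pi < az)
    (hdiam : ax < aw + Real.pi ∧ aw + Real.pi < au)
    (A B A' B' : Set (ℝ × ℝ))
    (hA : A = {circlePt au, circlePt av, circlePt aw})
    (hB : B = {circlePt ax, circlePt ay, circlePt az})
    (hA' : A' = {circlePt au, circlePt ay, circlePt aw})
    (hB' : B' = {circlePt ax, circlePt av, circlePt az})
    (h0A : (0 : ℝ × ℝ) ∈ interior (convexHull ℝ A))
    (h0B : (0 : ℝ × ℝ) ∈ interior (convexHull ℝ B)) :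
    (∀ a ∈ A', ∀ b ∈ B',
      (0 : ℝ × ℝ) ∈ convexHull ℝ (insert b (A' \ {a})) →
      (0 : ℝ × ℝ) ∈ convexHull ℝ (insert a (B' \ {b})) →
      a = circlePt ay ∧ b = circlePt av) ∧
    ¬ ∃ (N : ℕ) (f g : ℕ → Set (ℝ × ℝ)),
        f 0 = A ∧ g 0 = B ∧ f N = B ∧ g N = A ∧
        ∀ i < N, ∃ a ∈ f i, ∃ b ∈ g i,
          f (i + 1) = insert b (f i \ {a}) ∧ g (i + 1) = insert a (g i \ {b}) ∧
          (0 : ℝ × ℝ) ∈ convexHull ℝ (f (i + 1)) ∧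
          (0 : ℝ × ℝ) ∈ convexHull ℝ (g (i + 1)) := by
  subst hA hB hA' hB'
  have hc := ExchangeConfig.of_zero_mem_interior h2 h3 h4 h5 h6 hdiam.1 hdiam.2 h0A h0B
  refine ⟨hc.swap.eq_of_embracing, ?_⟩
  rintro ⟨N, f, g, hf0, hg0, hfN, -, hstep⟩
  rcases exchange_sequence_alternates (fun s => (0 : ℝ × ℝ) ∈ convexHull ℝ s)
      hc.eq_of_embracing hc.swap.eq_of_embracing hc.insert_sdiff_left
      hc.insert_sdiff_right hc.swap.insert_sdiff_left hc.swap.insert_sdiff_right hf0 hg0 hstep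
    with ⟨hf, -⟩ | ⟨hf, -⟩ <;>
    exact hc.circlePt_notMem (hfN ▸ hf ▸ mem_insert _ _)

/-- **Example 2, continued.** In the configuration of Example 2 (six points
on the unit circle in clockwise order `u, x, y, v, w, z`, both triangles containing the
origin, the diameter through `w` crossing the circle strictly between `u` and `x`), after
performing the unique feasible symmetric exchange, which yields `A' = {u, y, w}` and
`B' = {x, v, z}`, the only symmetric exchange `(a, b)` with `a ∈ A'`, `b ∈ B'` keeping both
triangles `0`-embracing is again `(y, v)`. Consequently, `(A, B)` cannot be transformed into
`(B, A)` by any sequence of symmetric exchanges preserving `0`-embracingness at every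
step. -/
theorem no_symmetric_exchange_swap (au ax ay av aw az : ℝ)
    (h1 : ax < au) (h2 : ay < ax) (h3 : av < ay) (h4 : aw < av) (h5 : az < aw)
    (h6 : au - 2 * Real.pi < az)
    (hdiam : ax < aw + Real.pi ∧ aw + Real.pi < au)
    (A B A' B' : Set (ℝ × ℝ))
    (hA : A = {circlePt au, circlePt av, circlePt aw})
    (hB : B = {circlePt ax, circlePt ay, circlePt az})
    (hA' : A' = {circlePt au, circlePt ay, circlePt aw})
    (hB' : B' = {circlePt ax, circlePt av, circlePt az})
    (h0A : (0 : ℝ × ℝ) ∈ interior (convexHull ℝ A))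
    (h0B : (0 : ℝ × ℝ) ∈ interior (convexHull ℝ B)) :
    (∀ a ∈ A', ∀ b ∈ B',
      (0 : ℝ × ℝ) ∈ convexHull ℝ (insert b (A' \ {a})) →
      (0 : ℝ × ℝ) ∈ convexHull ℝ (insert a (B' \ {b})) →
      a = circlePt ay ∧ b = circlePt av) ∧
    ¬ ∃ (N : ℕ) (f g : ℕ → Set (ℝ × ℝ)),
        f 0 = A ∧ g 0 = B ∧ f N = B ∧ g N = A ∧
        ∀ i < N, ∃ a ∈ f i, ∃ b ∈ g i,
          f (i + 1) = insert b (f i \ {a}) ∧ g (i + 1) = insert a (g i \ {b}) ∧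
          (0 : ℝ × ℝ) ∈ convexHull ℝ (f (i + 1)) ∧
          (0 : ℝ × ℝ) ∈ convexHull ℝ (g (i + 1)) :=
  no_symmetric_exchange_swap_general au ax ay av aw az h2 h3 h4 h5 h6 hdiam A B A' B' hA hB hA' hB'
    h0A h0B
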